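/- Let D be a regular (216, 40, 4, 8)-PDS in the group G = (ℤ/2ℤ)³ × (ℤ/3ℤ)³, and let H be a subgroup of G of order 72 (equivalently, of index 3). Then |H ∩ D| = 8 or |H ∩ D| = 16. -/

import Mathlib

/-- The number of representations of `g` as `a * b⁻¹` with `a, b ∈ D`. -/
def diffReps {G : Type*} [Group G] [DecidableEq G] (D : Finset G) (g : G) : ℕ :=
  ((D ×ˢ D).filter (fun p => p.1 * p.2⁻¹ = g)).card

/-- `D` is a `(v, k, λ, μ)`-partial difference set in the finite group `G`. -/
def IsPDS {G : Type*} [Group G] [Fintype G] [DecidableEq G]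
    (D : Finset G) (v k l m : ℕ) : Prop :=
  Fintype.card G = v ∧ D.card = k ∧
  ∀ g : G, g ≠ 1 →
    (g ∈ D → diffReps D g = l) ∧ (g ∉ D → diffReps D g = m)

/-- `D` is regular: it does not contain the identity and is closed under inverses. -/
def IsRegularPDS {G : Type*} [Group G] (D : Finset G) : Prop :=
  (1 : G) ∉ D ∧ ∀ d : G, d ∈ D ↔ d⁻¹ ∈ D

/-- A regular PDS `D` is trivial if `D ∪ {e}` or `G \ D` is a subgroup of `G`. -/
def IsTrivialPDS {G : Type*} [Group G] (D : Finset G) : Prop :=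
  (∃ H : Subgroup G, (H : Set G) = insert (1 : G) ↑D) ∨
  (∃ H : Subgroup G, (H : Set G) = (↑D : Set G)ᶜ)

/-- The group `(ℤ/2ℤ)³ × (ℤ/3ℤ)³`, written multiplicatively. -/
abbrev G216 : Type := Multiplicative ((Fin 3 → ZMod 2) × (Fin 3 → ZMod 3))

/-!
Partition `D` along the three cosets of `H`. Inverse-closure of `D` makes the two
nontrivial cosets carry the same number `x` of elements, so `n + 2x = k` with `n = |H ∩ D|`.
Counting the pairs `(a, b) ∈ D × D` with `a b⁻¹ ∈ H` once coset by coset (`n² + 2x²`) and once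
through the PDS parameters (`k + λ n + μ (|H| - 1 - n)`) gives a quadratic equation for `n`,
which for `(216, 40, 4, 8)` and `|H| = 72` reads `(n - 8)(n - 16) = 0`.
-/

open Finset

section PDS

variable {G : Type*} [Group G] [DecidableEq G]

theorem diffReps_one (D : Finset G) : diffReps D 1 = #D := by
  rw [diffReps, ← diag_card D]
  apply congrArg card
  ext ⟨a, b⟩
  simp only [mem_filter, mem_product, mem_diag, mul_inv_eq_one]
  constructor
  · rintro ⟨⟨ha, -⟩, rfl⟩
    exact ⟨ha, rfl⟩
  · rintro ⟨ha, rfl⟩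
    exact ⟨⟨ha, ha⟩, rfl⟩

theorem IsPDS.sum_diffReps_add [Fintype G] {D : Finset G} {v k l m : ℕ}
    (hD : IsPDS D v k l m) (hD1 : (1 : G) ∉ D) {S : Finset G} (hS1 : (1 : G) ∈ S) :
    ∑ g ∈ S, diffReps D g + m = k + l * #(S ∩ D) + m * #(S \ D) := by
  obtain ⟨-, hk, hlm⟩ := hD
  have h1 : (1 : G) ∈ S \ D := mem_sdiff.2 ⟨hS1, hD1⟩
  have hin : ∑ g ∈ S ∩ D, diffReps D g = l * #(S ∩ D) := by
    rw [sum_congr rfl fun g hg => (hlm g (ne_of_mem_of_not_mem (mem_inter.1 hg).2 hD1)).1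
      (mem_inter.1 hg).2, sum_const, smul_eq_mul, mul_comm]
  have hout : ∑ g ∈ (S \ D).erase 1, diffReps D g + m = m * #(S \ D) := by
    rw [sum_congr rfl fun g hg => (hlm g (ne_of_mem_erase hg)).2
      (mem_sdiff.1 (mem_of_mem_erase hg)).2, sum_const, smul_eq_mul,
      ← card_erase_add_one h1, mul_add_one, mul_comm]
  rw [← sum_inter_add_sum_sdiff S D, ← add_sum_erase _ _ h1, diffReps_one, hk, hin, ← hout]
  ring

end PDS

theorem exists_sum_univ_eq_one_add_add_inv {Q : Type*} [Group Q] [Fintype Q]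
    (hQ : Fintype.card Q = 3) (M : Type*) [AddCommMonoid M] :
    ∃ a : Q, ∀ f : Q → M, ∑ q, f q = f 1 + f a + f a⁻¹ := by
  classical
  obtain ⟨a, ha⟩ := Fintype.exists_ne_of_one_lt_card (by omega : 1 < Fintype.card Q) 1
  have : Fact (Nat.Prime 3) := ⟨Nat.prime_three⟩
  have horder : orderOf a = 3 := orderOf_eq_prime (hQ ▸ pow_card_eq_one) ha
  have hinv_ne : a⁻¹ ≠ a := fun h => by
    have : orderOf a ∣ 2 := orderOf_dvd_of_pow_eq_one (by rw [sq, mul_eq_one_iff_eq_inv, h])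
    rw [horder] at this
    omega
  have h1 : (1 : Q) ∉ ({a, a⁻¹} : Finset Q) := by
    simp only [mem_insert, mem_singleton, not_or]
    exact ⟨Ne.symm ha, fun h => ha (inv_eq_one.1 h.symm)⟩
  have h2 : a ∉ ({a⁻¹} : Finset Q) := by simpa using hinv_ne.symm
  have huniv : (univ : Finset Q) = {1, a, a⁻¹} := by
    refine (eq_univ_of_card _ ?_).symm
    rw [card_insert_of_notMem h1, card_insert_of_notMem h2, card_singleton, hQ]
  refine ⟨a, fun f => ?_⟩
  rw [huniv, sum_insert h1, sum_insert h2, sum_singleton, add_assoc]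

section Quotient

variable {G : Type*} [Group G] (H : Subgroup G) [H.Normal] [DecidablePred (· ∈ H)]

theorem card_filter_mk_eq_one (D : Finset G) :
    #{d ∈ D | (QuotientGroup.mk d : G ⧸ H) = 1} = #{d ∈ D | d ∈ H} := by
  simp only [QuotientGroup.eq_one_iff]

theorem card_filter_mk_eq_inv {D : Finset G} (hD : ∀ d, d ∈ D ↔ d⁻¹ ∈ D) (q : G ⧸ H) :
    #{d ∈ D | (QuotientGroup.mk d : G ⧸ H) = q⁻¹} =
      #{d ∈ D | (QuotientGroup.mk d : G ⧸ H) = q} := by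
  refine card_nbij' (·⁻¹) (·⁻¹) ?_ ?_ (fun d _ => inv_inv d) (fun d _ => inv_inv d)
  all_goals
    intro d hd
    simp only [coe_filter, Set.mem_ofPred_eq, QuotientGroup.mk_inv] at hd ⊢
    exact ⟨(hD d).1 hd.1, by simp [hd.2]⟩

variable [Fintype G] [DecidableEq G]

/-- Both sides count the pairs `(a, b) ∈ D × D` with `a b⁻¹ ∈ H`. -/
theorem sum_diffReps_subgroup_eq_sum_sq (D : Finset G) :
    ∑ g ∈ {g | g ∈ H}, diffReps D g =
      ∑ q : G ⧸ H, #{d ∈ D | (QuotientGroup.mk d : G ⧸ H) = q} ^ 2 := by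
  let pairs := {p ∈ D ×ˢ D | (QuotientGroup.mk p.1 : G ⧸ H) = QuotientGroup.mk p.2}
  have hdiff : ∑ g ∈ {g | g ∈ H}, diffReps D g = #pairs := by
    simp only [diffReps, card_filter]
    rw [sum_comm, card_filter]
    refine sum_congr rfl fun p _ => ?_
    simp only [sum_ite_eq, mem_filter, mem_univ, true_and, QuotientGroup.eq_iff_div_mem,
      div_eq_mul_inv]
  have hsq : #pairs = ∑ q : G ⧸ H, #{d ∈ D | (QuotientGroup.mk d : G ⧸ H) = q} ^ 2 := by
    rw [card_eq_sum_card_fiberwise (f := fun p => (QuotientGroup.mk p.1 : G ⧸ H)) (t := univ)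
      fun _ _ => mem_univ _]
    refine sum_congr rfl fun q _ => ?_
    rw [sq, ← card_product, filter_filter]
    congr 1
    ext ⟨a, b⟩
    simp only [mem_filter, mem_product]
    constructor
    · rintro ⟨⟨ha, hb⟩, hab, rfl⟩
      exact ⟨⟨ha, rfl⟩, hb, hab.symm⟩
    · rintro ⟨⟨ha, rfl⟩, hb, hba⟩
      exact ⟨⟨ha, hb⟩, hba.symm, rfl⟩
  rw [hdiff, hsq]

theorem IsPDS.quadratic_of_index_eq_three {D : Finset G} {v k l m : ℕ}
    (hD : IsPDS D v k l m) (hreg : IsRegularPDS D) (hH : H.index = 3) :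
    2 * ((k : ℤ) + l * #{d ∈ D | d ∈ H} + m * (Nat.card H - 1 - #{d ∈ D | d ∈ H})) =
      2 * #{d ∈ D | d ∈ H} ^ 2 + (k - #{d ∈ D | d ∈ H}) ^ 2 := by
  obtain ⟨a, ha⟩ := exists_sum_univ_eq_one_add_add_inv
    (by rw [← Nat.card_eq_fintype_card, ← H.index_eq_card, hH] : Fintype.card (G ⧸ H) = 3) ℕ
  set n := #{d ∈ D | d ∈ H}
  set x := #{d ∈ D | (QuotientGroup.mk d : G ⧸ H) = a}
  have hinv := card_filter_mk_eq_inv H hreg.2 a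
  have hone := card_filter_mk_eq_one H D
  have hlinear : n + 2 * x = k := by
    rw [← hD.2.1, card_eq_sum_card_fiberwise (f := (QuotientGroup.mk : G → G ⧸ H)) (t := univ)
      fun _ _ => mem_univ _, ha, hinv, hone]
    ring
  have hsquares : ∑ g ∈ {g | g ∈ H}, diffReps D g = n ^ 2 + 2 * x ^ 2 := by
    rw [sum_diffReps_subgroup_eq_sum_sq, ha, hinv, hone]
    ring
  have hinter : #(({g | g ∈ H} : Finset G) ∩ D) = n := by
    congr 1
    ext g
    simp [and_comm]
  have hcard : #(({g | g ∈ H} : Finset G) \ D) + n = Nat.card H := by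
    rw [← hinter, card_sdiff_add_card_inter, Nat.card_eq_fintype_card, Fintype.card_subtype]
  have hcount := hD.sum_diffReps_add hreg.1 (S := {g | g ∈ H}) (by simp)
  rw [hsquares, hinter] at hcount
  rw [← hcard]
  have hlinear' : (n : ℤ) + 2 * x = k := by exact_mod_cast hlinear
  have hcount' : (n : ℤ) ^ 2 + 2 * x ^ 2 + m =
      k + l * n + m * #(({g | g ∈ H} : Finset G) \ D) := by exact_mod_cast hcount
  push_cast
  linear_combination (-2 : ℤ) * hcount' + (2 * x + k - n) * hlinear'

end Quotient

/-- A regular `(216,40,4,8)`-PDS in `(ℤ/2ℤ)³ × (ℤ/3ℤ)³` meets every subgroup of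
order 72 in either 8 or 16 elements. -/
theorem index_three_subgroup_meets_40_PDS (D : Finset G216)
    (hD : IsPDS D 216 40 4 8) (hreg : IsRegularPDS D)
    (H : Subgroup G216) (hH : Nat.card H = 72) :
    ((H : Set G216) ∩ ↑D).ncard = 8 ∨ ((H : Set G216) ∩ ↑D).ncard = 16 := by
  classical
  have hindex : H.index = 3 := by
    have := H.card_mul_index
    rw [hH, Nat.card_eq_fintype_card, hD.1] at this
    omega
  have hquad := hD.quadratic_of_index_eq_three H hreg hindex
  have hncard : ((H : Set G216) ∩ ↑D).ncard = #{d ∈ D | d ∈ H} := by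
    rw [← Set.ncard_coe_finset, coe_filter, Set.inter_comm]
    rfl
  rw [hncard]
  rw [hH] at hquad
  set n := #{d ∈ D | d ∈ H}
  have hroots : 3 * ((n : ℤ) - 8) * ((n : ℤ) - 16) = 0 := by
    push_cast at hquad
    linear_combination -hquad
  rcases mul_eq_zero.1 hroots with h | h <;> omega
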